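/- arXiv:2403.04401 — 2 statements merged into one kernel-verified Lean document; each statement's English description precedes it below -/
import Mathlib

section
/- Let k, j, l be integers with k > j ≥ 0 and l ≥ 0. Then there exists N such that for every n ≥ N, every vertex v of the circulant Circ(n, S_{k,j,l}) satisfies e(v) = 3·C(k−1, 2) + 3(k − 1 − j), where C(k−1,2) denotes the binomial coefficient (k−1 choose 2). -/
/-!
For `n` large, `z ↦ v + z` identifies the neighbourhood of `v` in `Circ(n, S)` with the set
`D = T ∪ -T ⊆ ℤ` of signed jumps, two neighbours being adjacent iff their difference lies in `D`:
every difference involved is far smaller than `n`, so nothing wraps around. Counting ordered pairs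
of adjacent neighbours counts each edge twice, and every solution of `x + y = z` in `T` yields six
such pairs `(s, t)` with `s, t, s - t ∈ D`; hence `e(v)` is three times the number of solutions.
For `S_{k,j,l}`, the jumps outside `{1, …, k-1}` are `≡ -1 (mod k+j+1)` and no jump is a multiple
of `k+j+1`, so the solutions are those inside `{1, …, k-1}` (`C(k-1, 2)` of them) and
`x + y = k + j` with `x, y < k` (`k-1-j` of them).
-/

/-- The circulant graph `Circ(n, S)`: vertices are `ZMod n`, and distinct
vertices `x, y` are adjacent iff `x - y ∈ S ∪ (-S)`. -/
def Circulant (n : ℕ) (S : Set (ZMod n)) : SimpleGraph (ZMod n) where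
  Adj x y := x ≠ y ∧ x - y ∈ S ∪ -S
  symm := by
    constructor
    rintro x y ⟨hxy, h⟩
    refine ⟨hxy.symm, ?_⟩
    have hyx : y - x = -(x - y) := by ring
    rw [hyx]
    rcases h with h | h
    · exact Or.inr (Set.neg_mem_neg.mpr h)
    · exact Or.inl (Set.mem_neg.mp h)
  loopless := ⟨fun x h => h.1 rfl⟩

/-- The number of edges of the subgraph of `G` induced by the open
neighbourhood of the vertex `v` (the quantity `e(v)`). -/
noncomputable def nbhdEdgeCount {V : Type*} (G : SimpleGraph V) (v : V) : ℕ :=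
  Nat.card (SimpleGraph.induce (G.neighborSet v) G).edgeSet

/-- The jump set `S_{k,j,l} = {1, …, k-1} ∪ {k + j} ∪ R_{k,j,l}`, where
`R_{k,j,l}` consists of the first `l` terms of the arithmetic progression
starting at `2(k+j)+1` with common difference `k+j+1`, viewed inside `ZMod n`. -/
def Skjl (n k j l : ℕ) : Set (ZMod n) :=
  (fun i : ℕ => (i : ZMod n)) ''
    (Set.Icc 1 (k - 1) ∪ {k + j} ∪
      (fun i : ℕ => 2 * (k + j) + 1 + i * (k + j + 1)) '' Set.Iio l)

open Finset

namespace SimpleGraph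

variable {V : Type*} (G : SimpleGraph V)

def induceNeighborSetDartEquiv (v : V) :
    (G.induce (G.neighborSet v)).Dart ≃
      {p : V × V // G.Adj v p.1 ∧ G.Adj v p.2 ∧ G.Adj p.1 p.2} where
  toFun d := ⟨(d.fst, d.snd), d.fst.2, d.snd.2, d.adj⟩
  invFun p := ⟨(⟨p.1.1, p.2.1⟩, ⟨p.1.2, p.2.2.1⟩), p.2.2.2⟩

theorem two_mul_nbhdEdgeCount [Finite V] (v : V) :
    2 * nbhdEdgeCount G v =
      Nat.card {p : V × V // G.Adj v p.1 ∧ G.Adj v p.2 ∧ G.Adj p.1 p.2} := by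
  classical
  have := Fintype.ofFinite V
  rw [← Nat.card_congr (G.induceNeighborSetDartEquiv v), Nat.card_eq_fintype_card,
    dart_card_eq_twice_card_edges, nbhdEdgeCount, edgeFinset_card, Nat.card_eq_fintype_card]

end SimpleGraph

def diffPairs {G : Type*} [Sub G] (A : Set G) : Set (G × G) :=
  {p | p.1 ∈ A ∧ p.2 ∈ A ∧ p.1 - p.2 ∈ A}

section Circulant

variable {n : ℕ} {S : Set (ZMod n)}

theorem circulant_adj_iff (hS : (0 : ZMod n) ∉ S) {x y : ZMod n} :
    (Circulant n S).Adj x y ↔ x - y ∈ S ∪ -S := by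
  refine ⟨And.right, fun h => ⟨fun hxy => ?_, h⟩⟩
  rw [hxy, sub_self, Set.mem_union, Set.mem_neg, neg_zero, or_self] at h
  exact hS h

theorem card_adj_pairs_circulant (hS : (0 : ZMod n) ∉ S) (v : ZMod n) :
    Nat.card {p : ZMod n × ZMod n // (Circulant n S).Adj v p.1 ∧ (Circulant n S).Adj v p.2 ∧
        (Circulant n S).Adj p.1 p.2} = Nat.card (diffPairs (S ∪ -S)) := by
  refine Nat.card_congr (((Equiv.subLeft v).prodCongr (Equiv.subLeft v)).subtypeEquiv
    fun p => ?_)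
  rw [(Circulant n S).adj_comm p.1 p.2]
  simp only [circulant_adj_iff hS, diffPairs, Set.mem_ofPred_eq, Equiv.prodCongr_apply, Prod.map,
    Equiv.subLeft_apply, sub_sub_sub_cancel_left]

end Circulant

namespace ZMod

variable {n : ℕ}

theorem intCast_eq_intCast_iff_of_natAbs_sub_lt {z w : ℤ} (h : (z - w).natAbs < n) :
    (z : ZMod n) = w ↔ z = w := by
  refine ⟨fun hzw => ?_, congrArg _⟩
  rw [intCast_eq_intCast_iff_dvd_sub] at hzw
  have := Int.eq_zero_of_dvd_of_natAbs_lt_natAbs hzw (by omega)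
  omega

theorem intCast_mem_image_iff {D : Set ℤ} {B : ℕ} (hD : ∀ w ∈ D, w.natAbs ≤ B) {z : ℤ}
    (hz : z.natAbs + B < n) : (z : ZMod n) ∈ (Int.cast '' D : Set (ZMod n)) ↔ z ∈ D := by
  refine ⟨fun ⟨w, hw, hwz⟩ => ?_, Set.mem_image_of_mem _⟩
  have := hD w hw
  rwa [← (intCast_eq_intCast_iff_of_natAbs_sub_lt (by omega)).1 hwz]

theorem card_diffPairs_intCast_image (D : Finset ℤ) {B : ℕ}
    (hD : ∀ z ∈ D, z.natAbs ≤ B) (hn : 3 * B < n) :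
    Nat.card (diffPairs (Int.cast '' D : Set (ZMod n))) = #{p ∈ D ×ˢ D | p.1 - p.2 ∈ D} := by
  set f : ℤ × ℤ → ZMod n × ZMod n := Prod.map Int.cast Int.cast
  have hinj : Set.InjOn f ↑(D ×ˢ D) := by
    rintro ⟨s, t⟩ hst ⟨s', t'⟩ hst' h
    simp only [coe_product, Set.mem_prod, mem_coe] at hst hst'
    simp only [f, Prod.map, Prod.mk.injEq] at h ⊢
    have := hD s hst.1; have := hD t hst.2; have := hD s' hst'.1; have := hD t' hst'.2
    exact ⟨(intCast_eq_intCast_iff_of_natAbs_sub_lt (by omega)).1 h.1,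
      (intCast_eq_intCast_iff_of_natAbs_sub_lt (by omega)).1 h.2⟩
  have himage : diffPairs (Int.cast '' D : Set (ZMod n)) = f '' ↑{p ∈ D ×ˢ D | p.1 - p.2 ∈ D} := by
    ext ⟨a, b⟩
    simp only [diffPairs, Set.mem_ofPred_eq]
    constructor
    · rintro ⟨⟨s, hs, rfl⟩, ⟨t, ht, rfl⟩, hst⟩
      have := hD s hs; have := hD t ht
      rw [← Int.cast_sub, intCast_mem_image_iff hD (by omega)] at hst
      exact ⟨(s, t), by simpa using ⟨⟨hs, ht⟩, hst⟩, rfl⟩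
    · rintro ⟨⟨s, t⟩, hst, h⟩
      simp only [coe_filter, mem_product, Set.mem_ofPred_eq] at hst
      simp only [f, Prod.map, Prod.mk.injEq] at h
      rw [← h.1, ← h.2, ← Int.cast_sub]
      exact ⟨Set.mem_image_of_mem _ hst.1.1, Set.mem_image_of_mem _ hst.1.2,
        Set.mem_image_of_mem _ hst.2⟩
  rw [himage, Nat.card_image_of_injOn (hinj.mono (coe_subset.2 (filter_subset _ _))),
    Nat.card_coe_set_eq, Set.ncard_coe_finset]

end ZMod

theorem card_filter_sub_mem_eq_two_mul {D : Finset ℤ} (hD0 : 0 ∉ D) (hneg : ∀ z ∈ D, -z ∈ D) :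
    #{p ∈ D ×ˢ D | p.1 - p.2 ∈ D} = 2 * #{p ∈ D ×ˢ D | p.1 - p.2 ∈ D ∧ p.2 < p.1} := by
  have hswap : #{p ∈ {p ∈ D ×ˢ D | p.1 - p.2 ∈ D} | ¬p.2 < p.1} =
      #{p ∈ D ×ˢ D | p.1 - p.2 ∈ D ∧ p.2 < p.1} := by
    refine card_equiv (Equiv.prodComm ℤ ℤ) fun ⟨s, t⟩ => ?_
    simp only [mem_filter, mem_product, Equiv.prodComm_apply, Prod.swap_prod_mk]
    refine ⟨fun ⟨⟨⟨hs, ht⟩, hst⟩, hle⟩ => ⟨⟨ht, hs⟩, ?_, ?_⟩,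
      fun ⟨⟨ht, hs⟩, hts, hlt⟩ => ⟨⟨⟨hs, ht⟩, ?_⟩, not_lt.2 hlt.le⟩⟩
    · simpa using hneg _ hst
    · exact lt_of_le_of_ne (not_lt.1 hle) fun h => hD0 (by rwa [h, sub_self] at hst)
    · simpa using hneg _ hts
  rw [← card_filter_add_card_filter_not (fun p : ℤ × ℤ => p.2 < p.1), hswap, filter_filter]
  ring

def signedJumps (T : Finset ℕ) : Finset ℤ :=
  T.image (fun x : ℕ => (x : ℤ)) ∪ T.image fun x : ℕ => -(x : ℤ)

theorem mem_signedJumps {T : Finset ℕ} {z : ℤ} : z ∈ signedJumps T ↔ z.natAbs ∈ T := by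
  simp only [signedJumps, mem_union, mem_image]
  constructor
  · rintro (⟨x, hx, rfl⟩ | ⟨x, hx, rfl⟩) <;> simpa using hx
  · intro hz
    rcases Int.natAbs_eq z with h | h
    · exact Or.inl ⟨_, hz, h.symm⟩
    · exact Or.inr ⟨_, hz, h.symm⟩

/-- Solutions of `x + y = z` in `T`, recorded as `(x, z)`. -/
def schurPairs (T : Finset ℕ) : Finset (ℕ × ℕ) := {p ∈ T ×ˢ T | p.1 < p.2 ∧ p.2 - p.1 ∈ T}

theorem card_filter_sub_mem_signedJumps_lt {T : Finset ℕ} (hT : 0 ∉ T) :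
    #{p ∈ signedJumps T ×ˢ signedJumps T | p.1 - p.2 ∈ signedJumps T ∧ p.2 < p.1} =
      3 * #(schurPairs T) := by
  -- `t < s` are both positive, or straddle `0`, or are both negative.
  let pos : ℕ × ℕ → ℤ × ℤ := fun p => (p.2, p.1)
  let mixed : ℕ × ℕ → ℤ × ℤ := fun p => (p.1, (p.1 : ℤ) - p.2)
  let neg : ℕ × ℕ → ℤ × ℤ := fun p => (-(p.1 : ℤ), -(p.2 : ℤ))
  have hset : {p ∈ signedJumps T ×ˢ signedJumps T | p.1 - p.2 ∈ signedJumps T ∧ p.2 < p.1} =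
      (schurPairs T).image pos ∪ (schurPairs T).image mixed ∪ (schurPairs T).image neg := by
    ext ⟨s, t⟩
    simp only [schurPairs, mem_filter, mem_product, mem_signedJumps, mem_union, mem_image,
      Prod.exists, Prod.mk.injEq, pos, mixed, neg]
    constructor
    · rintro ⟨⟨hs, ht⟩, hst, hlt⟩
      have ht0 : t ≠ 0 := fun h => hT (by simpa [h] using ht)
      rcases ht0.lt_or_gt with ht0 | ht0
      · rcases lt_or_ge 0 s with hs0 | hs0
        · refine Or.inl (Or.inr ⟨s.natAbs, (s - t).natAbs, ⟨⟨hs, hst⟩, by omega, ?_⟩, by omega,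
            by omega⟩)
          convert ht using 1; omega
        · refine Or.inr ⟨s.natAbs, t.natAbs, ⟨⟨hs, ht⟩, by omega, ?_⟩, by omega, by omega⟩
          convert hst using 1; omega
      · refine Or.inl (Or.inl ⟨t.natAbs, s.natAbs, ⟨⟨ht, hs⟩, by omega, ?_⟩, by omega, by omega⟩)
        convert hst using 1; omega
    · rintro ((⟨x, z, ⟨⟨hx, hz⟩, hxz, hy⟩, rfl, rfl⟩ | ⟨x, z, ⟨⟨hx, hz⟩, hxz, hy⟩, rfl, rfl⟩) |
        ⟨x, z, ⟨⟨hx, hz⟩, hxz, hy⟩, rfl, rfl⟩) <;>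
      refine ⟨⟨?_, ?_⟩, ?_, by omega⟩ <;>
      first
        | simpa using hx
        | simpa using hz
        | (convert hy using 1; omega)
  have hlt : ∀ p ∈ schurPairs T, 0 < p.1 ∧ p.1 < p.2 := fun p hp =>
    ⟨Nat.pos_of_ne_zero fun h => hT (h ▸ (mem_product.1 (mem_filter.1 hp).1).1),
      (mem_filter.1 hp).2.1⟩
  have hsep {f g : ℕ × ℕ → ℤ × ℤ}
      (hfg : ∀ p q, 0 < p.1 → p.1 < p.2 → 0 < q.1 → q.1 < q.2 → f p ≠ g q) :
      Disjoint ((schurPairs T).image f) ((schurPairs T).image g) := by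
    simp only [disjoint_left, mem_image, not_exists, not_and]
    rintro _ ⟨p, hp, rfl⟩ q hq
    exact (hfg p q (hlt p hp).1 (hlt p hp).2 (hlt q hq).1 (hlt q hq).2).symm
  have hpm := hsep (f := pos) (g := mixed) fun p q _ _ _ _ h => by
    simp only [pos, mixed, Prod.ext_iff] at h; omega
  have hpn := hsep (f := pos) (g := neg) fun p q _ _ _ _ h => by
    simp only [pos, neg, Prod.ext_iff] at h; omega
  have hmn := hsep (f := mixed) (g := neg) fun p q _ _ _ _ h => by
    simp only [mixed, neg, Prod.ext_iff] at h; omega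
  rw [hset, card_union_of_disjoint (disjoint_union_left.2 ⟨hpn, hmn⟩),
    card_union_of_disjoint hpm,
    card_image_of_injective _ fun p q h => by simp only [pos, Prod.ext_iff] at h ⊢; omega,
    card_image_of_injective _ fun p q h => by simp only [mixed, Prod.ext_iff] at h ⊢; omega,
    card_image_of_injective _ fun p q h => by simp only [neg, Prod.ext_iff] at h ⊢; omega]
  ring

theorem card_filter_sub_mem_signedJumps {T : Finset ℕ} (hT : 0 ∉ T) :
    #{p ∈ signedJumps T ×ˢ signedJumps T | p.1 - p.2 ∈ signedJumps T} = 6 * #(schurPairs T) := by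
  rw [card_filter_sub_mem_eq_two_mul (by simpa [mem_signedJumps])
    (fun z hz => by simpa [mem_signedJumps] using hz), card_filter_sub_mem_signedJumps_lt hT]
  ring

theorem natCast_image_union_neg {R : Type*} [AddGroupWithOne R] (T : Finset ℕ) :
    (Nat.cast '' ↑T : Set R) ∪ -(Nat.cast '' ↑T) = Int.cast '' ↑(signedJumps T) := by
  ext a
  simp only [signedJumps, coe_union, coe_image, Set.image_union, Set.image_image, Int.cast_neg,
    Int.cast_natCast, Set.mem_union, Set.mem_neg, Set.mem_image, neg_eq_iff_eq_neg]

def jumpFinset (k j l : ℕ) : Finset ℕ :=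
  Icc 1 (k - 1) ∪ {k + j} ∪ (range l).image fun i => 2 * (k + j) + 1 + i * (k + j + 1)

theorem Skjl_eq_image (n k j l : ℕ) : Skjl n k j l = Nat.cast '' ↑(jumpFinset k j l) := by
  simp only [Skjl, jumpFinset, coe_union, coe_Icc, coe_singleton, coe_image, coe_range]

section jumpFinset

variable {k j l t : ℕ}

theorem mem_jumpFinset :
    t ∈ jumpFinset k j l ↔ (1 ≤ t ∧ t ≤ k - 1) ∨ ∃ q ≤ l, t + 1 = (q + 1) * (k + j + 1) := by
  simp only [jumpFinset, mem_union, mem_Icc, mem_singleton, mem_image, mem_range, or_assoc]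
  refine or_congr_right ⟨?_, ?_⟩
  · rintro (rfl | ⟨i, hi, rfl⟩)
    · exact ⟨0, Nat.zero_le _, by ring⟩
    · exact ⟨i + 1, hi, by ring⟩
  · rintro ⟨_ | i, hi, ht⟩
    · exact Or.inl (by omega)
    · exact Or.inr ⟨i, by omega, by linarith⟩

theorem not_dvd_of_mem_jumpFinset (hkj : 0 < k + j) (ht : t ∈ jumpFinset k j l) :
    ¬k + j + 1 ∣ t := by
  intro hdvd
  rcases mem_jumpFinset.1 ht with ⟨ht1, ht2⟩ | ⟨q, -, hq⟩
  · have := Nat.le_of_dvd (by omega) hdvd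
    omega
  · have := Nat.le_of_dvd one_pos ((Nat.dvd_add_right hdvd).1 (hq ▸ dvd_mul_left _ _))
    omega

theorem pos_of_mem_jumpFinset (hkj : 0 < k + j) (ht : t ∈ jumpFinset k j l) : 0 < t :=
  Nat.pos_of_ne_zero fun h => not_dvd_of_mem_jumpFinset hkj ht (h ▸ dvd_zero _)

theorem le_of_mem_jumpFinset (ht : t ∈ jumpFinset k j l) : t ≤ (l + 1) * (k + j + 1) := by
  rcases mem_jumpFinset.1 ht with ⟨-, ht⟩ | ⟨q, hq, ht⟩
  · have := Nat.le_mul_of_pos_left (k + j + 1) (by omega : 0 < l + 1)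
    omega
  · have := Nat.mul_le_mul_right (k + j + 1) (by omega : q + 1 ≤ l + 1)
    omega

theorem schurPairs_jumpFinset (hkj : 0 < k + j) :
    schurPairs (jumpFinset k j l) =
      {p ∈ Icc 1 (k - 1) ×ˢ Icc 1 (k - 1) | p.1 < p.2} ∪ Icc (j + 1) (k - 1) ×ˢ {k + j} := by
  have hsub {a b p q : ℕ} (ha : a + 1 = p * (k + j + 1)) (hb : b + 1 = q * (k + j + 1)) :
      k + j + 1 ∣ a - b := by
    have := Nat.dvd_sub (dvd_mul_left (k + j + 1) p) (dvd_mul_left (k + j + 1) q)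
    rwa [← ha, ← hb, Nat.add_sub_add_right] at this
  ext ⟨x, z⟩
  simp only [schurPairs, mem_filter, mem_product, mem_union, mem_Icc, mem_singleton]
  constructor
  · rintro ⟨⟨hx, hz⟩, hxz, hy⟩
    have hx0 := pos_of_mem_jumpFinset hkj hx
    rcases mem_jumpFinset.1 hz with hzs | ⟨q, -, hq⟩
    · exact Or.inl ⟨⟨⟨hx0, by omega⟩, by omega, hzs.2⟩, hxz⟩
    rcases mem_jumpFinset.1 hx with hxs | ⟨p, -, hp⟩
    swap
    · exact absurd (hsub hq hp) (not_dvd_of_mem_jumpFinset hkj hy)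
    rcases mem_jumpFinset.1 hy with hys | ⟨r, -, hr⟩
    swap
    · have := hsub hq hr
      rw [Nat.sub_sub_self hxz.le] at this
      exact absurd this (not_dvd_of_mem_jumpFinset hkj hx)
    -- `z` is a sum of two jumps below `k`, so it is the smallest jump `k + j` of the progression.
    have hq0 : q = 0 := by
      by_contra hq0
      have := Nat.mul_le_mul_right (k + j + 1) (show 2 ≤ q + 1 by omega)
      omega
    subst hq0
    exact Or.inr ⟨⟨by omega, hxs.2⟩, by omega⟩
  · have hsmall {t : ℕ} (h1 : 1 ≤ t) (h2 : t ≤ k - 1) : t ∈ jumpFinset k j l :=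
      mem_jumpFinset.2 (Or.inl ⟨h1, h2⟩)
    rintro (⟨⟨⟨hx1, hx2⟩, hz1, hz2⟩, hxz⟩ | ⟨⟨hx1, hx2⟩, rfl⟩)
    · exact ⟨⟨hsmall hx1 hx2, hsmall hz1 hz2⟩, hxz, hsmall (by omega) (by omega)⟩
    · exact ⟨⟨hsmall (by omega) hx2, mem_jumpFinset.2 (Or.inr ⟨0, Nat.zero_le _, by ring⟩)⟩,
        by omega, hsmall (by omega) (by omega)⟩

theorem card_schurPairs_jumpFinset (hkj : 0 < k + j) :
    #(schurPairs (jumpFinset k j l)) = (k - 1).choose 2 + (k - 1 - j) := by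
  have hdisj : Disjoint {p ∈ Icc 1 (k - 1) ×ˢ Icc 1 (k - 1) | p.1 < p.2}
      (Icc (j + 1) (k - 1) ×ˢ {k + j}) := by
    simp only [disjoint_left, mem_filter, mem_product, mem_Icc, mem_singleton]
    omega
  rw [schurPairs_jumpFinset hkj, card_union_of_disjoint hdisj, card_product_filter_lt,
    card_product, Nat.card_Icc, Nat.card_Icc, card_singleton, Nat.add_sub_cancel, mul_one]
  omega

end jumpFinset

/-- For integers `k > j ≥ 0` and `l ≥ 0`, there exists `N` such that for every
`n ≥ N`, every vertex `v` of `Circ(n, S_{k,j,l})` satisfies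
`e(v) = 3·C(k-1,2) + 3(k - 1 - j)`. -/
theorem nbhdEdgeCount_circulant_Skjl (k j l : ℕ) (hjk : j < k) :
    ∃ N : ℕ, ∀ n : ℕ, N ≤ n → ∀ v : ZMod n,
      nbhdEdgeCount (Circulant n (Skjl n k j l)) v =
        3 * Nat.choose (k - 1) 2 + 3 * (k - 1 - j) := by
  have hkj : 0 < k + j := by omega
  have hT : 0 ∉ jumpFinset k j l := fun h => (pos_of_mem_jumpFinset hkj h).false
  have hD : ∀ z ∈ signedJumps (jumpFinset k j l), z.natAbs ≤ (l + 1) * (k + j + 1) :=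
    fun z hz => le_of_mem_jumpFinset (mem_signedJumps.1 hz)
  refine ⟨3 * ((l + 1) * (k + j + 1)) + 1, fun n hn v => ?_⟩
  have : NeZero n := ⟨by omega⟩
  have hS : Skjl n k j l ∪ -Skjl n k j l = Int.cast '' ↑(signedJumps (jumpFinset k j l)) := by
    rw [Skjl_eq_image, natCast_image_union_neg]
  have hS0 : (0 : ZMod n) ∉ Skjl n k j l := fun h => by
    have h0 : ((0 : ℤ) : ZMod n) ∈ Int.cast '' ↑(signedJumps (jumpFinset k j l)) := by
      rw [Int.cast_zero, ← hS]
      exact Or.inl h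
    rw [ZMod.intCast_mem_image_iff hD (by simp; omega), mem_coe, mem_signedJumps] at h0
    exact hT h0
  have h2e := (Circulant n (Skjl n k j l)).two_mul_nbhdEdgeCount v
  rw [card_adj_pairs_circulant hS0, hS, ZMod.card_diffPairs_intCast_image _ hD (by omega),
    card_filter_sub_mem_signedJumps hT, card_schurPairs_jumpFinset hkj] at h2e
  omega
end

section
/- For every integer r ≥ 1 there exists an (r,0)-circulant: there exist n ≥ 1 and a set S of nonzero elements of Z_n such that the circulant Circ(n, S) is r-regular and triangle-free (equivalently, e(v) = 0 for every vertex v). -/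
/-!
The odd residues modulo `2r` form a symmetric set of `r` nonzero elements in which the sum of
any two elements is even, hence not in the set. So `Circ(2r, odd residues)` is `r`-regular, and a
triangle `x, y, z` would give odd differences `x - y`, `y - z` with odd sum `x - z`.
-/

theorem SimpleGraph.CliqueFree.nbhdEdgeCount_eq_zero {V : Type*} {G : SimpleGraph V}
    (hG : G.CliqueFree 3) (v : V) : nbhdEdgeCount G v = 0 := by
  have hind := G.isIndepSet_neighborSet_of_triangleFree hG v
  have : (G.induce (G.neighborSet v)).edgeSet = ∅ :=
    Set.eq_empty_of_forall_notMem fun e ↦ Sym2.ind (fun a b hab ↦ hind a.2 b.2 hab.ne hab) e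
  simp [nbhdEdgeCount, this]

namespace Circulant

variable {n : ℕ} {S : Set (ZMod n)}

theorem adj_iff (h0 : (0 : ZMod n) ∉ S) {x y : ZMod n} :
    (Circulant n S).Adj x y ↔ x - y ∈ S ∪ -S := by
  refine ⟨And.right, fun h ↦ ⟨fun hxy ↦ ?_, h⟩⟩
  rw [hxy, sub_self, Set.mem_union, Set.mem_neg, neg_zero, or_self] at h
  exact h0 h

theorem card_neighborSet (h0 : (0 : ZMod n) ∉ S) (v : ZMod n) :
    Nat.card ((Circulant n S).neighborSet v) = (S ∪ -S).ncard := by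
  rw [← Nat.card_coe_set_eq]
  exact Nat.card_congr
    { toFun := fun w ↦ ⟨v - w, (adj_iff h0).mp w.2⟩
      invFun := fun s ↦ ⟨v - s, (adj_iff h0).mpr (by simp)⟩
      left_inv := fun w ↦ by simp
      right_inv := fun s ↦ by simp }

theorem cliqueFree_three (hS : ∀ a ∈ S ∪ -S, ∀ b ∈ S ∪ -S, a + b ∉ S ∪ -S) :
    (Circulant n S).CliqueFree 3 := by
  rintro _ ht
  obtain ⟨x, y, z, hxy, hxz, hyz, rfl⟩ := SimpleGraph.is3Clique_iff.mp ht
  exact hS _ hxy.2 _ hyz.2 (by simpa using hxz.2)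

end Circulant

namespace AddMonoidHom

variable {G : Type*} [AddGroup G] (φ : G →+ ZMod 2)

theorem zero_notMem_preimage_one : (0 : G) ∉ φ ⁻¹' {1} := by
  simp

theorem neg_preimage_one : -(φ ⁻¹' {1}) = φ ⁻¹' {1} := by
  ext x
  simp [ZMod.neg_eq_self_mod_two]

theorem add_notMem_preimage_one {a b : G} (ha : a ∈ φ ⁻¹' {1}) (hb : b ∈ φ ⁻¹' {1}) :
    a + b ∉ φ ⁻¹' {1} := by
  simp_all [show (1 + 1 : ZMod 2) = 0 from rfl]

theorem two_mul_ncard_preimage_one [Finite G] (hφ : Function.Surjective φ) :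
    2 * (φ ⁻¹' {1}).ncard = Nat.card G := by
  obtain ⟨g, hg⟩ := hφ 1
  have hshift : (· + g) ⁻¹' (φ ⁻¹' {1}) = (φ ⁻¹' {1})ᶜ := by
    ext x
    simp only [Set.mem_preimage, Set.mem_compl_iff, Set.mem_singleton_iff, map_add, hg]
    generalize φ x = y
    revert y
    decide
  rw [← Set.ncard_add_ncard_compl (φ ⁻¹' {1}), ← hshift,
    Set.ncard_preimage_of_injective_subset_range (add_left_injective g)
      fun x _ ↦ ⟨x - g, sub_add_cancel x g⟩, two_mul]

end AddMonoidHom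

/-- For every integer `r ≥ 1` there exists an `(r,0)`-circulant: an `r`-regular
circulant graph that is triangle-free (equivalently, `e(v) = 0` for every vertex). -/
theorem exists_r_zero_circulant (r : ℕ) (hr : 1 ≤ r) :
    ∃ (n : ℕ), 1 ≤ n ∧ ∃ S : Set (ZMod n), (∀ s ∈ S, s ≠ 0) ∧
      (∀ v : ZMod n, Nat.card ((Circulant n S).neighborSet v) = r) ∧
      (Circulant n S).CliqueFree 3 ∧
      (∀ v : ZMod n, nbhdEdgeCount (Circulant n S) v = 0) := by
  have : NeZero (2 * r) := ⟨by omega⟩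
  set φ : ZMod (2 * r) →+ ZMod 2 := (ZMod.castHom (dvd_mul_right 2 r) (ZMod 2)).toAddMonoidHom
  set S := φ ⁻¹' {1}
  have h0 : (0 : ZMod (2 * r)) ∉ S := φ.zero_notMem_preimage_one
  have hsymm : S ∪ -S = S := by rw [φ.neg_preimage_one, Set.union_self]
  have hcard : S.ncard = r := by
    have h2 : 2 * S.ncard = Nat.card (ZMod (2 * r)) :=
      φ.two_mul_ncard_preimage_one (ZMod.castHom_surjective (dvd_mul_right 2 r))
    rw [Nat.card_zmod] at h2
    omega
  have htf : (Circulant (2 * r) S).CliqueFree 3 := Circulant.cliqueFree_three <| by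
    rw [hsymm]
    exact fun a ha b hb ↦ φ.add_notMem_preimage_one ha hb
  refine ⟨2 * r, by omega, S, fun s hs h ↦ h0 (h ▸ hs), fun v ↦ ?_, htf, htf.nbhdEdgeCount_eq_zero⟩
  rw [Circulant.card_neighborSet h0, hsymm, hcard]
end
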